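/- Let M be a tipless spike of rank r ≥ 5 with legs L₁, …, L_r, and let X be a two-element subset of the ground set of M. Then X is a leg of M (that is, X = L_i for some i) if and only if there exist two distinct circuits C₁ and C₂ of M, each of cardinality four, such that X = C₁ ∩ C₂. -/

import Mathlib

open Set

namespace Matroid

variable {α β : Type*}

/-- A circuit of a matroid is a minimal dependent set. -/
def Circuit (M : Matroid α) (C : Set α) : Prop :=
  M.Dep C ∧ ∀ ⦃D : Set α⦄, M.Dep D → D ⊆ C → D = C

/-- The rank of a set `X` in a matroid `M` : the maximum cardinality of an
independent subset of `X`. -/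
noncomputable def rkOn (M : Matroid α) (X : Set α) : ℕ :=
  sSup {n | ∃ I, M.Indep I ∧ I ⊆ X ∧ I.ncard = n}

/-- The rank of a matroid : the rank of its ground set. -/
noncomputable def rank (M : Matroid α) : ℕ := M.rkOn M.E

/-- A hyperplane : a flat whose rank is one less than the rank of the matroid. -/
def Hyperplane (M : Matroid α) (H : Set α) : Prop :=
  M.IsFlat H ∧ M.rkOn H + 1 = M.rank

/-- Deletion of the set `D` from the matroid `M`. -/
def delete' (M : Matroid α) (D : Set α) : Matroid α := M.restrict (M.E \ D)

/-- Contraction of the set `C` in the matroid `M`. -/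
def contract' (M : Matroid α) (C : Set α) : Matroid α := ((M✶).delete' C)✶

/-- A circuit `C` of `M` is freely placed if every circuit `C'` of `M` with `C' ≠ C`
and `C' ∩ C ≠ ∅` is spanning. -/
def FreelyPlaced (M : Matroid α) (C : Set α) : Prop :=
  ∀ ⦃C' : Set α⦄, M.Circuit C' → C' ≠ C → (C' ∩ C).Nonempty → M.Spanning C'

/-- A coloop is an element belonging to every base. -/
def Coloop (M : Matroid α) (e : α) : Prop := ∀ ⦃B : Set α⦄, M.IsBase B → e ∈ B

/-- An element `e` is free in `M` if it is not a coloop and every circuit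
containing `e` is spanning. -/
def FreeElem (M : Matroid α) (e : α) : Prop :=
  e ∈ M.E ∧ ¬ M.Coloop e ∧ ∀ ⦃C : Set α⦄, M.Circuit C → e ∈ C → M.Spanning C

/-- A loop is an element `e` such that `{e}` is a circuit. -/
def IsLoop' (M : Matroid α) (e : α) : Prop := M.Circuit {e}

/-- Two non-loop elements of the ground set are parallel if they are equal or
form a two-element circuit. -/
def Parallel (M : Matroid α) (e f : α) : Prop :=
  e ∈ M.E ∧ f ∈ M.E ∧ ¬ M.IsLoop' e ∧ ¬ M.IsLoop' f ∧ (e = f ∨ M.Circuit {e, f})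

/-- Two matroids are isomorphic if there is a bijection between their ground sets
mapping independent sets to independent sets. -/
def IsIso (M : Matroid α) (N : Matroid β) : Prop :=
  ∃ e : M.E ≃ N.E, ∀ I : Set M.E,
    M.Indep (Subtype.val '' I) ↔ N.Indep (Subtype.val '' (e '' I))

end Matroid

/-!
The four-element circuits of a tipless spike of rank `r ≥ 5` are exactly the unions of two
legs: a spanning circuit `C` satisfies `|C| = r(M) + 1 ≥ 6`, and every other non-spanning circuit
meets all `r ≥ 5` legs. Two distinct unions of pairs of legs meet in a leg when the pairs share an
index, and are disjoint otherwise.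
-/

namespace Set

open Function

variable {α ι : Type*}

theorem union_inter_union_of_disjoint {s t u : Set α} (h : Disjoint t u) :
    (s ∪ t) ∩ (s ∪ u) = s := by
  rw [← union_inter_distrib_left, h.inter_eq, union_empty]

theorem card_le_ncard_of_forall_inter_nonempty {L : ι → Set α}
    (hL : Pairwise (Disjoint on L)) {C : Set α} (hC : C.Finite)
    (hmeet : ∀ i, (C ∩ L i).Nonempty) : Nat.card ι ≤ C.ncard := by
  choose f hf using hmeet
  have hinj : InjOn f univ := fun i _ j _ hij =>
    by_contra fun hne => disjoint_left.1 (hL hne) (hf i).2 (hij ▸ (hf j).2)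
  simpa using ncard_le_ncard_of_injOn f (fun i _ => (hf i).1) hinj hC

theorem exists_union_eq_union_of_mem {L : ι → Set α} (hL : Pairwise (Disjoint on L))
    {i j a : ι} {x : α} (hx : x ∈ L i ∪ L j) (hxa : x ∈ L a) :
    ∃ b, L i ∪ L j = L a ∪ L b := by
  have eq_of_mem {p : ι} (hxp : x ∈ L p) : p = a :=
    by_contra fun hne => disjoint_left.1 (hL hne) hxp hxa
  rcases hx with hxi | hxj
  · exact ⟨j, by rw [eq_of_mem hxi]⟩
  · exact ⟨i, by rw [eq_of_mem hxj, union_comm]⟩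

end Set

namespace Matroid

open Function Set

variable {α : Type*} {M : Matroid α} {B C : Set α}

theorem circuit_iff_isCircuit : M.Circuit C ↔ M.IsCircuit C := by
  simp only [Circuit, IsCircuit, minimal_iff, eq_comm]

theorem rank_eq_ncard_of_isBase (hB : M.IsBase B) (hBfin : B.Finite) : M.rank = B.ncard := by
  refine IsGreatest.csSup_eq ⟨⟨B, hB.indep, hB.subset_ground, rfl⟩, ?_⟩
  rintro _ ⟨I, hI, -, rfl⟩
  obtain ⟨B', hB', hIB'⟩ := hI.exists_isBase_superset
  calc I.ncard ≤ B'.ncard := ncard_le_ncard hIB' (hB.finite_of_finite hBfin hB')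
    _ = B.ncard := hB'.ncard_eq_ncard_of_isBase hB

theorem IsCircuit.rank_add_one_eq_ncard (hC : M.IsCircuit C) (hCs : M.Spanning C)
    (hCfin : C.Finite) : M.rank + 1 = C.ncard := by
  obtain ⟨e, he⟩ := hC.nonempty
  have hB : M.IsBase (C \ {e}) := (hC.sdiff_singleton_isBasis he).isBase_of_spanning hCs
  rw [rank_eq_ncard_of_isBase hB hCfin.sdiff, ncard_sdiff_singleton_add_one he hCfin]

theorem exists_eq_union_of_circuit_of_ncard_eq_four {r : ℕ} (hr5 : 5 ≤ r) (hrk : M.rank = r)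
    {L : Fin r → Set α} (hL : Pairwise (Disjoint on L))
    (hns : ∀ C : Set α, M.Circuit C → ¬ M.Spanning C →
      (¬ ∃ i j : Fin r, i ≠ j ∧ C = L i ∪ L j) →
      (M.Hyperplane C ∧ ∀ i : Fin r, (C ∩ L i).ncard = 1))
    (hC : M.Circuit C) (hC4 : C.ncard = 4) : ∃ i j : Fin r, i ≠ j ∧ C = L i ∪ L j := by
  by_contra hleg
  have hCfin : C.Finite := finite_of_ncard_ne_zero (by omega)
  by_cases hCs : M.Spanning C
  · have := (circuit_iff_isCircuit.1 hC).rank_add_one_eq_ncard hCs hCfin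
    omega
  · have hmeet (i : Fin r) : (C ∩ L i).Nonempty :=
      nonempty_of_ncard_ne_zero (by rw [(hns C hC hCs hleg).2 i]; exact one_ne_zero)
    have := card_le_ncard_of_forall_inter_nonempty hL hCfin hmeet
    rw [Nat.card_fin] at this
    omega

theorem spike_leg_iff_general (M : Matroid α) (r : ℕ) (hr5 : 5 ≤ r)
    (hrk : M.rank = r) (L : Fin r → Set α)
    (hdisj : ∀ i j : Fin r, i ≠ j → Disjoint (L i) (L j))
    (hcard : ∀ i : Fin r, (L i).ncard = 2)
    (hlegs : ∀ i j : Fin r, i ≠ j → M.Circuit (L i ∪ L j))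
    (hns : ∀ C : Set α, M.Circuit C → ¬ M.Spanning C →
      (¬ ∃ i j : Fin r, i ≠ j ∧ C = L i ∪ L j) →
      (M.Hyperplane C ∧ ∀ i : Fin r, (C ∩ L i).ncard = 1))
    (X : Set α) (hX2 : X.ncard = 2) :
    (∃ i : Fin r, X = L i) ↔
      ∃ C₁ C₂ : Set α, M.Circuit C₁ ∧ M.Circuit C₂ ∧ C₁ ≠ C₂ ∧
        C₁.ncard = 4 ∧ C₂.ncard = 4 ∧ X = C₁ ∩ C₂ := by
  have hL : Pairwise (Disjoint on L) := fun i j => hdisj i j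
  constructor
  · rintro ⟨i, rfl⟩
    obtain ⟨j, hji, -⟩ := Fin.exists_ne_and_ne_of_two_lt i i (by omega)
    obtain ⟨k, hki, hkj⟩ := Fin.exists_ne_and_ne_of_two_lt i j (by omega)
    have hfin (n : Fin r) : (L n).Finite := finite_of_ncard_ne_zero (by rw [hcard]; omega)
    have hcard4 {m : Fin r} (hm : m ≠ i) : (L i ∪ L m).ncard = 4 := by
      rw [ncard_union_eq (hL hm.symm) (hfin i) (hfin m), hcard, hcard]
    have hX : (L i ∪ L j) ∩ (L i ∪ L k) = L i := union_inter_union_of_disjoint (hL hkj.symm)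
    refine ⟨_, _, hlegs i j hji.symm, hlegs i k hki.symm, fun h => ?_, hcard4 hji, hcard4 hki,
      hX.symm⟩
    rw [h, inter_self] at hX
    have := congrArg ncard hX
    rw [hcard4 hki, hcard] at this
    omega
  · rintro ⟨C₁, C₂, hC₁, hC₂, hne, hC₁4, hC₂4, rfl⟩
    have legs_union {C : Set α} (hC : M.Circuit C) (hC4 : C.ncard = 4) :=
      exists_eq_union_of_circuit_of_ncard_eq_four hr5 hrk hL hns hC hC4
    obtain ⟨i, j, -, rfl⟩ := legs_union hC₁ hC₁4
    obtain ⟨k, l, -, rfl⟩ := legs_union hC₂ hC₂4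
    obtain ⟨x, hx₁, hx₂⟩ := nonempty_of_ncard_ne_zero (hX2 ▸ two_ne_zero)
    obtain ⟨a, hxa⟩ : ∃ a, x ∈ L a := hx₁.elim (⟨i, ·⟩) (⟨j, ·⟩)
    obtain ⟨b, hb⟩ := exists_union_eq_union_of_mem hL hx₁ hxa
    obtain ⟨c, hc⟩ := exists_union_eq_union_of_mem hL hx₂ hxa
    rw [hb, hc] at hne ⊢
    exact ⟨a, union_inter_union_of_disjoint (hL fun hbc : b = c => hne (by rw [hbc]))⟩

/-- In a tipless spike of rank `r ≥ 5`, a two-element subset `X` of the ground set is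
a leg iff `X` is the intersection of two distinct four-element circuits. -/
theorem spike_leg_iff (M : Matroid α) [M.Finite] (r : ℕ) (hr5 : 5 ≤ r)
    (hrk : M.rank = r) (L : Fin r → Set α)
    (hdisj : ∀ i j : Fin r, i ≠ j → Disjoint (L i) (L j))
    (hcard : ∀ i : Fin r, (L i).ncard = 2)
    (hground : (⋃ i : Fin r, L i) = M.E)
    (hlegs : ∀ i j : Fin r, i ≠ j → M.Circuit (L i ∪ L j))
    (hns : ∀ C : Set α, M.Circuit C → ¬ M.Spanning C →
      (¬ ∃ i j : Fin r, i ≠ j ∧ C = L i ∪ L j) →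
      (M.Hyperplane C ∧ ∀ i : Fin r, (C ∩ L i).ncard = 1))
    (X : Set α) (hX : X ⊆ M.E) (hX2 : X.ncard = 2) :
    (∃ i : Fin r, X = L i) ↔
      ∃ C₁ C₂ : Set α, M.Circuit C₁ ∧ M.Circuit C₂ ∧ C₁ ≠ C₂ ∧
        C₁.ncard = 4 ∧ C₂.ncard = 4 ∧ X = C₁ ∩ C₂ :=
  spike_leg_iff_general M r hr5 hrk L hdisj hcard hlegs hns X hX2

end Matroid
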